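/- Let P, Q be orthogonal projections in generic position on H. Then the operator K := Q - PQP - (1-P)Q(1-P) is selfadjoint and injective. -/

import Mathlib

/-!
Relative to `H = ran P ⊕ ker P`, the operator `K` is the off-diagonal part
`P Q (1 - P) + (1 - P) Q P` of `Q`. If `K x = 0` then both blocks kill `x`: `Q` maps `(1 - P) x`
into `ker P ∩ ran Q = 0`, so `(1 - P) x ∈ ker P ∩ ker Q = 0`; likewise `Q` maps `P x` into
`ran P ∩ ran Q = 0`, so `P x ∈ ran P ∩ ker Q = 0`.
-/

open ContinuousLinearMap

variable {H : Type*} [NormedAddCommGroup H] [InnerProductSpace ℂ H] [CompleteSpace H]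

/-- An orthogonal projection: a selfadjoint idempotent bounded operator. -/
def IsOrthogonalProjection (P : H →L[ℂ] H) : Prop :=
  IsSelfAdjoint P ∧ P * P = P

/-- A symmetry: a selfadjoint unitary operator. -/
def IsSymmetry (V : H →L[ℂ] H) : Prop :=
  IsSelfAdjoint V ∧ V * V = 1

/-- Two orthogonal projections are in generic position if the four canonical
intersections of their ranges and kernels are trivial. -/
def GenericPosition (P Q : H →L[ℂ] H) : Prop :=
  LinearMap.range (P : H →ₗ[ℂ] H) ⊓ LinearMap.range (Q : H →ₗ[ℂ] H) = ⊥ ∧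
  LinearMap.range (P : H →ₗ[ℂ] H) ⊓ LinearMap.ker (Q : H →ₗ[ℂ] H) = ⊥ ∧
  LinearMap.ker (P : H →ₗ[ℂ] H) ⊓ LinearMap.range (Q : H →ₗ[ℂ] H) = ⊥ ∧
  LinearMap.ker (P : H →ₗ[ℂ] H) ⊓ LinearMap.ker (Q : H →ₗ[ℂ] H) = ⊥

section Ring

variable {R : Type*} [Ring R]

theorem sub_conj_sub_conj_one_sub_eq (p q : R) :
    q - p * q * p - (1 - p) * q * (1 - p) = p * q * (1 - p) + (1 - p) * q * p := by
  noncomm_ring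

theorem IsSelfAdjoint.sub_conj_sub_conj_one_sub [StarRing R] {p q : R} (hp : IsSelfAdjoint p)
    (hq : IsSelfAdjoint q) : IsSelfAdjoint (q - p * q * p - (1 - p) * q * (1 - p)) := by
  have hp' : IsSelfAdjoint (1 - p) := (IsSelfAdjoint.one R).sub hp
  simpa only [hp.star_eq, hp'.star_eq] using (hq.sub (hq.conjugate p)).sub (hq.conjugate (1 - p))

variable {p : R}

theorem IsIdempotentElem.mul_offDiag (hp : IsIdempotentElem p) (q : R) :
    p * (p * q * (1 - p) + (1 - p) * q * p) = p * q * (1 - p) := by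
  rw [mul_add, ← mul_assoc, ← mul_assoc, ← mul_assoc, ← mul_assoc, hp.eq, hp.mul_one_sub_self,
    zero_mul, zero_mul, add_zero]

theorem IsIdempotentElem.one_sub_mul_offDiag (hp : IsIdempotentElem p) (q : R) :
    (1 - p) * (p * q * (1 - p) + (1 - p) * q * p) = (1 - p) * q * p := by
  simpa only [sub_sub_cancel, add_comm] using hp.one_sub.mul_offDiag q

end Ring

theorem Submodule.eq_zero_of_mem_of_apply_mem {R M : Type*} [Semiring R] [AddCommMonoid M]
    [Module R M] {S : Submodule R M} {f : M →ₗ[R] M} (hrange : S ⊓ LinearMap.range f = ⊥)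
    (hker : S ⊓ LinearMap.ker f = ⊥) {y : M} (hy : y ∈ S) (hfy : f y ∈ S) : y = 0 := by
  have hfy0 : f y = 0 := (Submodule.eq_bot_iff _).1 hrange _ ⟨hfy, y, rfl⟩
  exact (Submodule.eq_bot_iff _).1 hker _ ⟨hy, hfy0⟩

theorem ContinuousLinearMap.injective_offDiag {R M : Type*} [Ring R] [TopologicalSpace M]
    [AddCommGroup M] [IsTopologicalAddGroup M] [Module R M] {P Q : M →L[R] M}
    (hP : IsIdempotentElem P)
    (hPQ : LinearMap.range (P : M →ₗ[R] M) ⊓ LinearMap.range (Q : M →ₗ[R] M) = ⊥)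
    (hPQ' : LinearMap.range (P : M →ₗ[R] M) ⊓ LinearMap.ker (Q : M →ₗ[R] M) = ⊥)
    (hP'Q : LinearMap.ker (P : M →ₗ[R] M) ⊓ LinearMap.range (Q : M →ₗ[R] M) = ⊥)
    (hP'Q' : LinearMap.ker (P : M →ₗ[R] M) ⊓ LinearMap.ker (Q : M →ₗ[R] M) = ⊥) :
    Function.Injective ⇑(P * Q * (1 - P) + (1 - P) * Q * P) := by
  refine (injective_iff_map_eq_zero _).2 fun x hx => ?_
  have h1 : (P * Q * (1 - P)) x = 0 := by
    rw [← hP.mul_offDiag Q, mul_apply_eq_comp, hx, map_zero]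
  have h2 : ((1 - P) * Q * P) x = 0 := by
    rw [← hP.one_sub_mul_offDiag Q, mul_apply_eq_comp, hx, map_zero]
  have hker : (1 - P) x = 0 := by
    refine Submodule.eq_zero_of_mem_of_apply_mem hP'Q hP'Q' ?_ h1
    change (P * (1 - P)) x = 0
    rw [hP.mul_one_sub_self, zero_apply]
  have hrange : P x = 0 := by
    refine Submodule.eq_zero_of_mem_of_apply_mem hPQ hPQ' ⟨x, rfl⟩ ⟨Q (P x), ?_⟩
    rwa [mul_apply_eq_comp, mul_apply_eq_comp, sub_apply, one_apply_eq_self, sub_eq_zero,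
      eq_comm] at h2
  rwa [sub_apply, one_apply_eq_self, hrange, sub_zero] at hker

theorem K_selfadjoint_injective (P Q : H →L[ℂ] H)
    (hP : IsOrthogonalProjection P) (hQ : IsOrthogonalProjection Q)
    (hgen : GenericPosition P Q) :
    IsSelfAdjoint (Q - P * Q * P - (1 - P) * Q * (1 - P)) ∧
    Function.Injective ⇑(Q - P * Q * P - (1 - P) * Q * (1 - P)) := by
  refine ⟨hP.1.sub_conj_sub_conj_one_sub hQ.1, ?_⟩
  rw [sub_conj_sub_conj_one_sub_eq]
  exact injective_offDiag hP.2 hgen.1 hgen.2.1 hgen.2.2.1 hgen.2.2.2
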